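/- arXiv:2605.22191 — 4 statements merged into one kernel-verified Lean document; each statement's English description precedes it below -/
import Mathlib

section
/- Let f be β-smooth on ℝ^d, y ∈ ℝ^d, δ > 0, v uniform on S^{d-1}, m ∈ ℝ^d. Define Δ = f(y+δv) - f(y-δv) - 2δ⟨m, v⟩ and ĝ = m + (d/(2δ)) Δ v. Then E[‖ĝ - m‖²] ≤ 2d‖∇f(y) - m‖² + (d²/2) β² δ². -/
/-!
Split the numerator as `Δ = e + 2δ⟪∇f(y) - m, v⟫`, where
`e = f(y + δv) - f(y - δv) - 2δ⟪∇f(y), v⟫` is the error of the central difference; the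
quadratic Taylor bound `|f(x + h) - f(x) - ⟪∇f(x), h⟫| ≤ β‖h‖²/2`, applied to `h = ±δv`, gives
`|e| ≤ βδ²`.
On the unit sphere `‖ĝ - m‖² = (d/2δ)² Δ² ≤ 2d²⟪∇f(y) - m, v⟫² + d²β²δ²/2`. Finally, rotation
invariance gives `d · E⟪u, v⟫² = ‖u‖²`: a reflection carries `u` to any vector of the same norm, so
`E⟪u, v⟫² = ‖u‖² E⟪bᵢ, v⟫²` for every vector `bᵢ` of an orthonormal basis, and summing over the
basis yields `E‖v‖² = 1`.
-/

open MeasureTheory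
open scoped RealInnerProductSpace

section Smooth

variable {E : Type*} [NormedAddCommGroup E] [InnerProductSpace ℝ E] [CompleteSpace E]
  {f : E → ℝ} {β : ℝ}

theorem abs_sub_sub_inner_gradient_le (hf : Differentiable ℝ f)
    (hβ : ∀ x y, ‖gradient f x - gradient f y‖ ≤ β * ‖x - y‖) (x h : E) :
    |f (x + h) - f x - ⟪gradient f x, h⟫| ≤ β / 2 * ‖h‖ ^ 2 := by
  let φ : ℝ → ℝ := fun t => f (x + t • h) - f x - t * ⟪gradient f x, h⟫
  have hφ : ∀ t, HasDerivAt φ ⟪gradient f (x + t • h) - gradient f x, h⟫ t := by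
    intro t
    have hline : HasDerivAt (fun t : ℝ => x + t • h) h t := by
      simpa using ((hasDerivAt_id t).smul_const h).const_add x
    have := (((hf _).hasGradientAt.hasFDerivAt.comp_hasDerivAt t hline).sub_const (f x)).sub
      ((hasDerivAt_id t).mul_const ⟪gradient f x, h⟫)
    exact this.congr_deriv (by simp [inner_sub_left])
  have hB : ∀ t, HasDerivAt (fun t : ℝ => β / 2 * ‖h‖ ^ 2 * t ^ 2) (β * ‖h‖ ^ 2 * t) t := by
    intro t
    refine (((hasDerivAt_id t).pow 2).const_mul (β / 2 * ‖h‖ ^ 2)).congr_deriv ?_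
    simp; ring
  have bound : ∀ t ∈ Set.Ico (0 : ℝ) 1,
      ‖⟪gradient f (x + t • h) - gradient f x, h⟫‖ ≤ β * ‖h‖ ^ 2 * t := by
    intro t ht
    calc ‖⟪gradient f (x + t • h) - gradient f x, h⟫‖
        ≤ ‖gradient f (x + t • h) - gradient f x‖ * ‖h‖ := norm_inner_le_norm _ _
      _ ≤ β * ‖x + t • h - x‖ * ‖h‖ := by gcongr; exact hβ _ _
      _ = β * ‖h‖ ^ 2 * t := by
        rw [add_sub_cancel_left, norm_smul, Real.norm_of_nonneg ht.1]; ring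
  have := image_norm_le_of_norm_deriv_right_le_deriv_boundary
    (fun t _ => (hφ t).continuousAt.continuousWithinAt) (fun t _ => (hφ t).hasDerivWithinAt)
    (by simp [φ]) hB bound (Set.right_mem_Icc.mpr zero_le_one)
  simpa [φ] using this

theorem abs_sub_sub_two_inner_gradient_le (hf : Differentiable ℝ f)
    (hβ : ∀ x y, ‖gradient f x - gradient f y‖ ≤ β * ‖x - y‖) (x h : E) :
    |f (x + h) - f (x - h) - 2 * ⟪gradient f x, h⟫| ≤ β * ‖h‖ ^ 2 := by
  have hplus := abs_le.mp (abs_sub_sub_inner_gradient_le hf hβ x h)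
  have hminus := abs_le.mp (abs_sub_sub_inner_gradient_le hf hβ x (-h))
  rw [← sub_eq_add_neg, inner_neg_right, norm_neg] at hminus
  exact abs_le.mpr ⟨by linarith, by linarith⟩

theorem sq_norm_central_difference_estimator_sub_le (hf : Differentiable ℝ f)
    (hβ : ∀ x y, ‖gradient f x - gradient f y‖ ≤ β * ‖x - y‖) {δ : ℝ} (hδ : 0 < δ) (c : ℝ)
    (y m : E) {v : E} (hv : ‖v‖ = 1) :
    ‖(m + (c / (2 * δ) * (f (y + δ • v) - f (y - δ • v) - 2 * δ * ⟪m, v⟫)) • v) - m‖ ^ 2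
      ≤ 2 * c ^ 2 * ⟪gradient f y - m, v⟫ ^ 2 + c ^ 2 / 2 * β ^ 2 * δ ^ 2 := by
  have herr := abs_sub_sub_two_inner_gradient_le hf hβ y (δ • v)
  rw [norm_smul, Real.norm_of_nonneg hδ.le, hv, mul_one, real_inner_smul_right] at herr
  set e := f (y + δ • v) - f (y - δ • v) - 2 * (δ * ⟪gradient f y, v⟫)
  set t := ⟪gradient f y - m, v⟫
  have hsplit : f (y + δ • v) - f (y - δ • v) - 2 * δ * ⟪m, v⟫ = e + 2 * δ * t := by
    simp only [e, t, inner_sub_left]; ring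
  have he : e ^ 2 ≤ (β * δ ^ 2) ^ 2 := sq_le_sq' (abs_le.mp herr).1 (abs_le.mp herr).2
  have hsq : (e + 2 * δ * t) ^ 2 ≤ 2 * (β * δ ^ 2) ^ 2 + 8 * δ ^ 2 * t ^ 2 := by
    nlinarith [sq_nonneg (e - 2 * δ * t)]
  rw [add_sub_cancel_left, norm_smul, hv, mul_one, Real.norm_eq_abs, sq_abs, hsplit]
  calc (c / (2 * δ) * (e + 2 * δ * t)) ^ 2 = c ^ 2 / (4 * δ ^ 2) * (e + 2 * δ * t) ^ 2 := by ring
    _ ≤ c ^ 2 / (4 * δ ^ 2) * (2 * (β * δ ^ 2) ^ 2 + 8 * δ ^ 2 * t ^ 2) := by gcongr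
    _ = 2 * c ^ 2 * t ^ 2 + c ^ 2 / 2 * β ^ 2 * δ ^ 2 := by field_simp; ring

end Smooth

section Sphere

variable {E : Type*} [NormedAddCommGroup E] [MeasurableSpace E] [BorelSpace E] {μ : Measure E}

theorem ae_norm_eq_one_of_measure_sphere [IsProbabilityMeasure μ]
    (hsupp : μ (Metric.sphere 0 1) = 1) : ∀ᵐ v ∂μ, ‖v‖ = 1 := by
  have : ∀ᵐ v ∂μ, v ∈ Metric.sphere (0 : E) 1 :=
    (ae_mem_iff_measure_eq Metric.isClosed_sphere.measurableSet.nullMeasurableSet).mpr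
      (by rw [hsupp, measure_univ])
  simpa using this

variable [InnerProductSpace ℝ E]

theorem integrable_inner_sq [IsProbabilityMeasure μ] (hsupp : μ (Metric.sphere 0 1) = 1) (w : E) :
    Integrable (fun v => ⟪w, v⟫ ^ 2) μ := by
  refine (integrable_const (‖w‖ ^ 2)).mono'
    ((continuous_const.inner continuous_id).pow 2).aestronglyMeasurable ?_
  filter_upwards [ae_norm_eq_one_of_measure_sphere hsupp] with v hv
  rw [Real.norm_of_nonneg (sq_nonneg _), ← sq_abs, ← mul_one ‖w‖, ← hv]
  gcongr
  exact abs_real_inner_le_norm w v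

theorem integral_inner_sq_eq_of_norm_eq (hinv : ∀ e : E ≃ₗᵢ[ℝ] E, μ.map e = μ) {w w' : E}
    (hw : ‖w‖ = ‖w'‖) : ∫ v, ⟪w, v⟫ ^ 2 ∂μ = ∫ v, ⟪w', v⟫ ^ 2 ∂μ := by
  let e : E ≃ₗᵢ[ℝ] E := Submodule.reflection (ℝ ∙ (w - w'))ᗮ
  have hew : e w = w' := Submodule.reflection_sub hw
  conv_lhs => rw [← hinv e]
  rw [integral_map e.continuous.aemeasurable
    ((continuous_const.inner continuous_id).pow 2).aestronglyMeasurable]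
  congr 1 with v
  rw [← e.inner_map_map w, hew, Submodule.reflection_reflection]

theorem finrank_mul_integral_inner_sq [IsProbabilityMeasure μ] [FiniteDimensional ℝ E]
    (hsupp : μ (Metric.sphere 0 1) = 1) (hinv : ∀ e : E ≃ₗᵢ[ℝ] E, μ.map e = μ) (w : E) :
    Module.finrank ℝ E * ∫ v, ⟪w, v⟫ ^ 2 ∂μ = ‖w‖ ^ 2 := by
  let b := stdOrthonormalBasis ℝ E
  have hbasis : ∀ i, ∫ v, ⟪w, v⟫ ^ 2 ∂μ = ‖w‖ ^ 2 * ∫ v, ⟪b i, v⟫ ^ 2 ∂μ := by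
    intro i
    rw [integral_inner_sq_eq_of_norm_eq hinv (w' := ‖w‖ • b i)
      (by rw [norm_smul, norm_norm, b.orthonormal.1 i, mul_one]),
      ← integral_const_mul]
    simp only [real_inner_smul_left, mul_pow]
  have hparseval : ∑ i, ∫ v, ⟪b i, v⟫ ^ 2 ∂μ = 1 := by
    rw [← integral_finsetSum _ fun i _ => integrable_inner_sq hsupp (b i)]
    calc ∫ v, ∑ i, ⟪b i, v⟫ ^ 2 ∂μ = ∫ _, (1 : ℝ) ∂μ := by
          refine integral_congr_ae ?_
          filter_upwards [ae_norm_eq_one_of_measure_sphere hsupp] with v hv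
          rw [b.sum_sq_inner_right, hv, one_pow]
      _ = 1 := by simp
  calc Module.finrank ℝ E * ∫ v, ⟪w, v⟫ ^ 2 ∂μ = ∑ i, ‖w‖ ^ 2 * ∫ v, ⟪b i, v⟫ ^ 2 ∂μ := by
        simp_rw [← hbasis, Finset.sum_const, Finset.card_univ, Fintype.card_fin, nsmul_eq_mul]
    _ = ‖w‖ ^ 2 := by rw [← Finset.mul_sum, hparseval, mul_one]

end Sphere

theorem second_moment_variance_reduced_estimator_general {d : ℕ}
    (μ : Measure (EuclideanSpace ℝ (Fin d))) [IsProbabilityMeasure μ]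
    (hsupp : μ (Metric.sphere (0 : EuclideanSpace ℝ (Fin d)) 1) = 1)
    (hinv : ∀ e : EuclideanSpace ℝ (Fin d) ≃ₗᵢ[ℝ] EuclideanSpace ℝ (Fin d),
      Measure.map e μ = μ)
    (f : EuclideanSpace ℝ (Fin d) → ℝ) (β δ : ℝ) (hδ : 0 < δ)
    (hf : Differentiable ℝ f)
    (hβ : ∀ x y, ‖gradient f x - gradient f y‖ ≤ β * ‖x - y‖)
    (y m : EuclideanSpace ℝ (Fin d)) :
    ∫ v, ‖(m + (((d : ℝ) / (2 * δ)) *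
        (f (y + δ • v) - f (y - δ • v) - 2 * δ * ⟪m, v⟫)) • v) - m‖ ^ 2 ∂μ
      ≤ 2 * d * ‖gradient f y - m‖ ^ 2 + ((d : ℝ) ^ 2 / 2) * β ^ 2 * δ ^ 2 := by
  have hint := integrable_inner_sq hsupp (gradient f y - m)
  have hvar := finrank_mul_integral_inner_sq hsupp hinv (gradient f y - m)
  rw [finrank_euclideanSpace_fin] at hvar
  calc _ ≤ ∫ v, (2 * (d : ℝ) ^ 2 * ⟪gradient f y - m, v⟫ ^ 2
          + (d : ℝ) ^ 2 / 2 * β ^ 2 * δ ^ 2) ∂μ := by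
        refine integral_mono_of_nonneg (ae_of_all _ fun v => by positivity)
          ((hint.const_mul _).add (integrable_const _)) ?_
        filter_upwards [ae_norm_eq_one_of_measure_sphere hsupp] with v hv
        exact sq_norm_central_difference_estimator_sub_le hf hβ hδ d y m hv
    _ = 2 * d * ‖gradient f y - m‖ ^ 2 + ((d : ℝ) ^ 2 / 2) * β ^ 2 * δ ^ 2 := by
        rw [integral_add (hint.const_mul _) (integrable_const _), integral_const_mul,
          integral_const, ← hvar]
        simp only [probReal_univ, one_smul]
        ring

/-- For `f` `β`-smooth, `y ∈ ℝ^d`, `δ > 0`, `v` uniform on `S^{d-1}`,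
and `m ∈ ℝ^d`, defining `Δ = f(y+δv) - f(y-δv) - 2δ⟨m,v⟩` and `ĝ = m + (d/(2δ)) Δ v`,
we have `E[‖ĝ - m‖²] ≤ 2d‖∇f(y) - m‖² + (d²/2) β² δ²`. -/
theorem second_moment_variance_reduced_estimator {d : ℕ} (hd : 0 < d)
    (μ : Measure (EuclideanSpace ℝ (Fin d))) [IsProbabilityMeasure μ]
    (hsupp : μ (Metric.sphere (0 : EuclideanSpace ℝ (Fin d)) 1) = 1)
    (hinv : ∀ e : EuclideanSpace ℝ (Fin d) ≃ₗᵢ[ℝ] EuclideanSpace ℝ (Fin d),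
      Measure.map e μ = μ)
    (f : EuclideanSpace ℝ (Fin d) → ℝ) (β δ : ℝ) (hδ : 0 < δ)
    (hf : Differentiable ℝ f)
    (hβ : ∀ x y, ‖gradient f x - gradient f y‖ ≤ β * ‖x - y‖)
    (y m : EuclideanSpace ℝ (Fin d)) :
    ∫ v, ‖(m + (((d : ℝ) / (2 * δ)) *
        (f (y + δ • v) - f (y - δ • v) - 2 * δ * ⟪m, v⟫)) • v) - m‖ ^ 2 ∂μ
      ≤ 2 * d * ‖gradient f y - m‖ ^ 2 + ((d : ℝ) ^ 2 / 2) * β ^ 2 * δ ^ 2 :=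
  second_moment_variance_reduced_estimator_general μ hsupp hinv f β δ hδ hf hβ y m
end

section
/- Let C ⊂ ℝ^d be nonempty, closed, convex. Consider the optimistic projected-gradient scheme y_t = Π_C(y'_t - η m_t) and y'_{t+1} = Π_C(y'_t - η ĝ_t) with y'_1 ∈ C and η > 0. Then for any fixed y★ ∈ C and any horizon T ≥ 1: Σ_{t=1}^T ⟨ĝ_t, y_t - y★⟩ ≤ ‖y★ - y'_1‖²/(2η) + η Σ_{t=1}^T ‖ĝ_t - m_t‖². -/
/-!
Both iterates are projections onto `C`, so each satisfies the variational inequality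
`⟪u - Π u, w - Π u⟫ ≤ 0` for `w ∈ C`. Testing the one for `y'_{t+1}` at `y★` and the one for
`y_t` at `y'_{t+1}`, and expanding with the polarisation identity, bounds `η ⟪ĝ_t, y_t - y★⟫`
by `η² ‖ĝ_t - m_t‖²` plus `(‖y'_t - y★‖² - ‖y'_{t+1} - y★‖²) / 2`: Young's inequality absorbs
the cross term `η ⟪ĝ_t - m_t, y_t - y'_{t+1}⟫` into the term `-‖y_t - y'_{t+1}‖² / 2` left over
from polarisation. Summing over `t` telescopes.
-/

open Finset
open scoped RealInnerProductSpace

theorem Finset.sum_Icc_le_add_sum_of_le_add_sub {α : Type*} [AddCommGroup α] [PartialOrder α]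
    [IsOrderedAddMonoid α] {a b φ : ℕ → α} {m n : ℕ} (hmn : m ≤ n + 1) (hφ : 0 ≤ φ (n + 1))
    (h : ∀ t, a t ≤ b t + (φ t - φ (t + 1))) :
    ∑ t ∈ Icc m n, a t ≤ φ m + ∑ t ∈ Icc m n, b t := by
  have htel : ∑ t ∈ Icc m n, (φ t - φ (t + 1)) = φ m - φ (n + 1) := by
    rw [← neg_inj, ← sum_neg_distrib, ← Ico_add_one_right_eq_Icc]
    simp only [neg_sub]
    exact sum_Ico_sub φ hmn
  calc ∑ t ∈ Icc m n, a t ≤ ∑ t ∈ Icc m n, (b t + (φ t - φ (t + 1))) :=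
        sum_le_sum fun t _ => h t
    _ ≤ φ m + ∑ t ∈ Icc m n, b t := by
        rw [sum_add_distrib, htel, add_comm]
        exact add_le_add_left (sub_le_self _ hφ) _

section
variable {F : Type*} [NormedAddCommGroup F] [InnerProductSpace ℝ F]

theorem real_inner_sub_le_zero_of_forall_norm_sub_le {K : Set F} (hK : Convex ℝ K) {u p : F}
    (hp : p ∈ K) (hmin : ∀ w ∈ K, ‖u - p‖ ≤ ‖u - w‖) : ∀ w ∈ K, ⟪u - p, w - p⟫ ≤ 0 := by
  have : Nonempty K := ⟨⟨p, hp⟩⟩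
  refine (norm_eq_iInf_iff_real_inner_le_zero hK hp).mp
    (le_antisymm (le_ciInf fun w => hmin w w.2) ?_)
  exact ciInf_le ⟨0, fun _ ⟨w, h⟩ => h ▸ norm_nonneg _⟩ (⟨p, hp⟩ : K)

theorem real_inner_le_norm_sq_add_norm_sq_div_four (x y : F) :
    ⟪x, y⟫ ≤ ‖x‖ ^ 2 + ‖y‖ ^ 2 / 4 := by
  nlinarith [real_inner_le_norm x y, sq_nonneg (‖x‖ - ‖y‖ / 2)]

theorem optimistic_step_inner_le {η : ℝ} {a b p s G M : F}
    (hb : ⟪a - η • G - b, s - b⟫ ≤ 0) (hp : ⟪a - η • M - p, b - p⟫ ≤ 0) :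
    η * ⟪G, p - s⟫ ≤ η ^ 2 * ‖G - M‖ ^ 2 + (‖a - s‖ ^ 2 - ‖b - s‖ ^ 2) / 2 := by
  have hyoung : η * ⟪G - M, p - b⟫ ≤ η ^ 2 * ‖G - M‖ ^ 2 + ‖p - b‖ ^ 2 / 4 := by
    simpa [← real_inner_smul_left, norm_smul, mul_pow] using
      real_inner_le_norm_sq_add_norm_sq_div_four (η • (G - M)) (p - b)
  have hb' : η * ⟪G, b - s⟫ ≤ ⟪a - b, b - s⟫ := by
    simp only [inner_sub_left, inner_sub_right, real_inner_smul_left] at hb ⊢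
    linarith
  have hp' : η * ⟪M, p - b⟫ ≤ ⟪a - p, p - b⟫ := by
    simp only [inner_sub_left, inner_sub_right, real_inner_smul_left] at hp ⊢
    linarith
  have hpolar_b := norm_add_sq_real (a - b) (b - s)
  have hpolar_p := norm_add_sq_real (a - p) (p - b)
  rw [sub_add_sub_cancel] at hpolar_b hpolar_p
  have hsplit : ⟪G, p - s⟫ = ⟪G - M, p - b⟫ + ⟪M, p - b⟫ + ⟪G, b - s⟫ := by
    simp only [inner_sub_left, inner_sub_right]; ring
  rw [hsplit]
  nlinarith [sq_nonneg ‖a - p‖, sq_nonneg ‖p - b‖]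

theorem optimistic_step_inner_le_div {η : ℝ} (hη : 0 < η) {a b p s G M : F}
    (hb : ⟪a - η • G - b, s - b⟫ ≤ 0) (hp : ⟪a - η • M - p, b - p⟫ ≤ 0) :
    ⟪G, p - s⟫ ≤ η * ‖G - M‖ ^ 2 + (‖a - s‖ ^ 2 / (2 * η) - ‖b - s‖ ^ 2 / (2 * η)) := by
  have h := optimistic_step_inner_le hb hp
  rw [← mul_le_mul_iff_right₀ hη]
  field_simp
  linarith
end

theorem optimistic_projected_gradient_regret_general {d : ℕ}
    (C : Set (EuclideanSpace ℝ (Fin d))) (hconv : Convex ℝ C)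
    (P : EuclideanSpace ℝ (Fin d) → EuclideanSpace ℝ (Fin d))
    (hP : ∀ u, P u ∈ C ∧ ∀ w ∈ C, ‖u - P u‖ ≤ ‖u - w‖)
    (η : ℝ) (hη : 0 < η)
    (m g y y' : ℕ → EuclideanSpace ℝ (Fin d))
    (hy : ∀ t, y t = P (y' t - η • m t))
    (hy' : ∀ t, y' (t + 1) = P (y' t - η • g t))
    (ystar : EuclideanSpace ℝ (Fin d)) (hstar : ystar ∈ C)
    (T : ℕ) :
    ∑ t ∈ Finset.Icc 1 T, ⟪g t, y t - ystar⟫ ≤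
      ‖ystar - y' 1‖ ^ 2 / (2 * η) + η * ∑ t ∈ Finset.Icc 1 T, ‖g t - m t‖ ^ 2 := by
  have hvi : ∀ u, ∀ w ∈ C, ⟪u - P u, w - P u⟫ ≤ 0 := fun u =>
    real_inner_sub_le_zero_of_forall_norm_sub_le hconv (hP u).1 (hP u).2
  have hstep : ∀ t, ⟪g t, y t - ystar⟫ ≤ η * ‖g t - m t‖ ^ 2 +
      (‖y' t - ystar‖ ^ 2 / (2 * η) - ‖y' (t + 1) - ystar‖ ^ 2 / (2 * η)) := fun t => by
    rw [hy t, hy' t]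
    exact optimistic_step_inner_le_div hη (hvi _ _ hstar) (hvi _ _ (hP _).1)
  calc ∑ t ∈ Icc 1 T, ⟪g t, y t - ystar⟫
      ≤ ‖y' 1 - ystar‖ ^ 2 / (2 * η) + ∑ t ∈ Icc 1 T, η * ‖g t - m t‖ ^ 2 :=
        sum_Icc_le_add_sum_of_le_add_sub (by omega) (by positivity) hstep
    _ = _ := by rw [norm_sub_rev, mul_sum]

/-- For the optimistic projected-gradient scheme
`y_t = Π_C(y'_t - η m_t)`, `y'_{t+1} = Π_C(y'_t - η ĝ_t)` on a nonempty closed convex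
set `C` with `y'_1 ∈ C` and `η > 0`, for any fixed `y★ ∈ C` and any horizon `T ≥ 1`:
`Σ_{t=1}^T ⟨ĝ_t, y_t - y★⟩ ≤ ‖y★ - y'_1‖²/(2η) + η Σ_{t=1}^T ‖ĝ_t - m_t‖²`. -/
theorem optimistic_projected_gradient_regret {d : ℕ}
    (C : Set (EuclideanSpace ℝ (Fin d))) (hconv : Convex ℝ C)
    (hclosed : IsClosed C) (hne : C.Nonempty)
    (P : EuclideanSpace ℝ (Fin d) → EuclideanSpace ℝ (Fin d))
    (hP : ∀ u, P u ∈ C ∧ ∀ w ∈ C, ‖u - P u‖ ≤ ‖u - w‖)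
    (η : ℝ) (hη : 0 < η)
    (m g y y' : ℕ → EuclideanSpace ℝ (Fin d))
    (hy'1 : y' 1 ∈ C)
    (hy : ∀ t, y t = P (y' t - η • m t))
    (hy' : ∀ t, y' (t + 1) = P (y' t - η • g t))
    (ystar : EuclideanSpace ℝ (Fin d)) (hstar : ystar ∈ C)
    (T : ℕ) (hT : 1 ≤ T) :
    ∑ t ∈ Finset.Icc 1 T, ⟪g t, y t - ystar⟫ ≤
      ‖ystar - y' 1‖ ^ 2 / (2 * η) + η * ∑ t ∈ Finset.Icc 1 T, ‖g t - m t‖ ^ 2 :=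
  optimistic_projected_gradient_regret_general C hconv P hP η hη m g y y' hy hy' ystar hstar T
end

section
/- For every L > 0 and δ ∈ (0,1), there exists a convex, L-Lipschitz function f : [−1,1] → ℝ, differentiable at 0, such that |f(δ) − f(−δ) − 2δ f'(0)| = (2/3) L δ; equivalently |(f(δ) − f(−δ))/(2δ) − f'(0)| = L/3. Hence the symmetric-difference remainder need not vanish faster than Θ(Lδ) without smoothness. -/
/-- For every `L > 0` and `δ ∈ (0,1)`, there exists a convex, `L`-Lipschitz
function `f : [−1,1] → ℝ`, differentiable at `0`, such that
`|f(δ) − f(−δ) − 2δ f'(0)| = (2/3) L δ`; equivalently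
`|(f(δ) − f(−δ))/(2δ) − f'(0)| = L/3`. Hence the symmetric-difference remainder need not
vanish faster than `Θ(Lδ)` without smoothness. -/
theorem exists_lipschitz_convex_nonvanishing_remainder (L δ : ℝ)
    (hL : 0 < L) (hδ : δ ∈ Set.Ioo (0 : ℝ) 1) :
    ∃ (f : ℝ → ℝ) (f'0 : ℝ),
      ConvexOn ℝ (Set.Icc (-1 : ℝ) 1) f ∧
      (∀ x ∈ Set.Icc (-1 : ℝ) 1, ∀ y ∈ Set.Icc (-1 : ℝ) 1, |f x - f y| ≤ L * |x - y|) ∧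
      HasDerivAt f f'0 0 ∧
      |f δ - f (-δ) - 2 * δ * f'0| = (2 / 3) * L * δ ∧
      |(f δ - f (-δ)) / (2 * δ) - f'0| = L / 3 := by
  obtain ⟨hδ0, hδ1⟩ := hδ
  set c : ℝ := δ / 2 with hc
  refine ⟨fun x => (2 * L / 3) * |x + c|, 2 * L / 3, ?_, ?_, ?_, ?_, ?_⟩
  · -- convexity
    refine ⟨convex_Icc _ _, ?_⟩
    intro x _ y _ a b ha hb hab
    have h1 : a • x + b • y + c = a * (x + c) + b * (y + c) := by
      simp only [smul_eq_mul]; nlinarith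
    have h2 : |a * (x + c) + b * (y + c)| ≤ a * |x + c| + b * |y + c| := by
      calc |a * (x + c) + b * (y + c)| ≤ |a * (x + c)| + |b * (y + c)| := abs_add_le _ _
        _ = a * |x + c| + b * |y + c| := by
            rw [abs_mul, abs_mul, abs_of_nonneg ha, abs_of_nonneg hb]
    have hL3 : (0:ℝ) ≤ 2 * L / 3 := by positivity
    have h3 : a • x + b • y + c = a * (x + c) + b * (y + c) := h1
    show (2 * L / 3) * |a • x + b • y + c|
        ≤ a * ((2 * L / 3) * |x + c|) + b * ((2 * L / 3) * |y + c|)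
    rw [h3]
    nlinarith [mul_le_mul_of_nonneg_left h2 hL3]
  · -- Lipschitz
    intro x _ y _
    have h1 : abs ((2 * L / 3) * abs (x + c) - (2 * L / 3) * abs (y + c))
        = (2 * L / 3) * abs (abs (x + c) - abs (y + c)) := by
      rw [← mul_sub, abs_mul, abs_of_nonneg (by positivity : (0:ℝ) ≤ 2 * L / 3)]
    show abs ((2 * L / 3) * abs (x + c) - (2 * L / 3) * abs (y + c)) ≤ L * abs (x - y)
    rw [h1]
    have h2 : abs (abs (x + c) - abs (y + c)) ≤ abs (x - y) := by
      have := abs_abs_sub_abs_le_abs_sub (x + c) (y + c)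
      simpa using this
    nlinarith [abs_nonneg (x - y), abs_nonneg (abs (x + c) - abs (y + c))]
  · -- derivative at 0
    have hd : HasDerivAt (fun x : ℝ => (2 * L / 3) * (x + c)) (2 * L / 3) 0 := by
      simpa using ((hasDerivAt_id (0:ℝ)).add_const c).const_mul (2 * L / 3)
    apply hd.congr_of_eventuallyEq
    have hc0 : 0 < c := by positivity
    have : Set.Ioo (-c) c ∈ nhds (0:ℝ) := Ioo_mem_nhds (by linarith) hc0
    filter_upwards [this] with x hx
    rw [abs_of_pos (by linarith [hx.1] : 0 < x + c)]
  · -- first equality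
    have e1 : |δ + c| = δ + c := abs_of_pos (by positivity)
    have e2 : |-δ + c| = δ - c := by
      rw [abs_of_nonpos (by simp only [hc]; linarith)]; ring
    show |(2 * L / 3) * |δ + c| - (2 * L / 3) * |-δ + c| - 2 * δ * (2 * L / 3)| = 2 / 3 * L * δ
    rw [e1, e2]
    rw [show (2 * L / 3) * (δ + c) - (2 * L / 3) * (δ - c) - 2 * δ * (2 * L / 3)
        = -(2 / 3 * L * δ) by simp only [hc]; ring]
    rw [abs_neg, abs_of_nonneg (by positivity)]
  · -- second equality
    have e1 : |δ + c| = δ + c := abs_of_pos (by positivity)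
    have e2 : |-δ + c| = δ - c := by
      rw [abs_of_nonpos (by simp only [hc]; linarith)]; ring
    show |((2 * L / 3) * |δ + c| - (2 * L / 3) * |-δ + c|) / (2 * δ) - 2 * L / 3| = L / 3
    rw [e1, e2]
    have hδne : (2 * δ) ≠ 0 := by positivity
    rw [show ((2 * L / 3) * (δ + c) - (2 * L / 3) * (δ - c)) / (2 * δ) - 2 * L / 3
        = -(L / 3) by field_simp [hc]; ring]
    rw [abs_neg, abs_of_nonneg (by positivity)]
end

section
/- Let X ⊆ ℝ^d be convex with 0 ∈ X, Euclidean diameter ≤ D, and containing the ball rB for some r > 0. Let δ ∈ (0, r), α = δ/r, X_α = (1−α)X. If each f_t is convex and L-Lipschitz on X, x* ∈ argmin_{x∈X} Σ_t f_t(x), y* = (1−α)x*, and x_t = y_t + δ v_t with y_t ∈ X_α and ‖v_t‖ = 1, then Σ_{t=1}^T (f_t(x_t) − f_t(x*)) ≤ Σ_{t=1}^T (f_t(y_t) − f_t(y*)) + (L + LD/r) δ T. Moreover, y_t + δ v_t ∈ X for all t. -/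
open scoped Pointwise

/-! With `B` the closed unit ball, convexity gives
`(1 - δ/r) • X + δ B = (1 - δ/r) • X + (δ/r) • (r B) ⊆ X`, so the perturbed points stay in `X`.
The comparison is then two Lipschitz estimates per round: moving `y_t` by `δ v_t` costs at
most `L δ`, and moving `x*` to `(1 - δ/r) x*` costs at most `L (δ/r) ‖x*‖ ≤ L D δ / r`. -/

open Metric

section

variable {E : Type*} [NormedAddCommGroup E]

theorem sub_le_of_abs_sub_le_mul_norm {f : E → ℝ} {L c : ℝ} {x y : E} (hL : 0 ≤ L)
    (hf : |f x - f y| ≤ L * ‖x - y‖) (hxy : ‖x - y‖ ≤ c) : f x - f y ≤ L * c :=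
  (le_abs_self _).trans (hf.trans (mul_le_mul_of_nonneg_left hxy hL))

variable [NormedSpace ℝ E]

theorem Convex.one_sub_div_smul_add_closedBall_subset {X : Set E} (hX : Convex ℝ X)
    {r δ : ℝ} (hr : 0 < r) (hδ : 0 ≤ δ) (hδr : δ ≤ r) (hball : closedBall 0 r ⊆ X) :
    (1 - δ / r) • X + closedBall 0 δ ⊆ X := by
  have hα : 0 ≤ δ / r := div_nonneg hδ hr.le
  have h1α : 0 ≤ 1 - δ / r := sub_nonneg.2 (div_le_one_of_le₀ hδr hr.le)
  calc (1 - δ / r) • X + closedBall 0 δ = (1 - δ / r) • X + (δ / r) • closedBall 0 r := by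
        rw [smul_closedBall _ _ hr.le, smul_zero, Real.norm_of_nonneg hα,
          div_mul_cancel₀ _ hr.ne']
    _ ⊆ (1 - δ / r) • X + (δ / r) • X := by gcongr
    _ ⊆ X := hX.set_combo_subset h1α hα (sub_add_cancel 1 _)

theorem norm_one_sub_smul_sub_self {α : ℝ} (hα : 0 ≤ α) (x : E) :
    ‖(1 - α) • x - x‖ = α * ‖x‖ := by
  rw [sub_smul, one_smul, sub_sub_cancel_left, norm_neg, norm_smul, Real.norm_of_nonneg hα]

theorem sub_le_sub_one_sub_div_smul_add {X : Set E} {f : E → ℝ} {L D r δ : ℝ} (hL : 0 ≤ L)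
    (hr : 0 < r) (hδ : 0 ≤ δ) (hlip : ∀ x ∈ X, ∀ y ∈ X, |f x - f y| ≤ L * ‖x - y‖)
    {x y w : E} (hx : x ∈ X) (hxD : ‖x‖ ≤ D) (hsx : (1 - δ / r) • x ∈ X) (hy : y ∈ X)
    (hyw : y + w ∈ X) (hw : ‖w‖ ≤ δ) :
    f (y + w) - f x ≤ f y - f ((1 - δ / r) • x) + (L + L * D / r) * δ := by
  have hα : 0 ≤ δ / r := div_nonneg hδ hr.le
  have hshift : f (y + w) - f y ≤ L * δ :=
    sub_le_of_abs_sub_le_mul_norm hL (hlip _ hyw _ hy) (by rwa [add_sub_cancel_left])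
  have hshrink : f ((1 - δ / r) • x) - f x ≤ L * (δ / r * D) :=
    sub_le_of_abs_sub_le_mul_norm hL (hlip _ hsx _ hx)
      ((norm_one_sub_smul_sub_self hα x).trans_le (mul_le_mul_of_nonneg_left hxD hα))
  have hcost : L * δ + L * (δ / r * D) = (L + L * D / r) * δ := by ring
  linarith

end

theorem Finset.sum_le_sum_add_card_mul {ι R : Type*} [CommSemiring R] [PartialOrder R]
    [IsOrderedAddMonoid R] (s : Finset ι) {a b : ι → R} {c : R}
    (h : ∀ i ∈ s, a i ≤ b i + c) : ∑ i ∈ s, a i ≤ ∑ i ∈ s, b i + c * s.card := by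
  calc ∑ i ∈ s, a i ≤ ∑ i ∈ s, (b i + c) := Finset.sum_le_sum h
    _ = ∑ i ∈ s, b i + c * s.card := by
      rw [Finset.sum_add_distrib, Finset.sum_const, nsmul_eq_mul, mul_comm]

theorem regret_decomposition_shrunk_domain_general {d : ℕ}
    (X : Set (EuclideanSpace ℝ (Fin d))) (hX : Convex ℝ X)
    (h0 : (0 : EuclideanSpace ℝ (Fin d)) ∈ X)
    (D L r δ : ℝ) (hr : 0 < r)
    (hD : ∀ x ∈ X, ∀ y ∈ X, ‖x - y‖ ≤ D)
    (hball : Metric.closedBall (0 : EuclideanSpace ℝ (Fin d)) r ⊆ X)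
    (hδ : 0 < δ) (hδr : δ < r)
    (T : ℕ) (f : ℕ → EuclideanSpace ℝ (Fin d) → ℝ)
    (hlip : ∀ t, ∀ x ∈ X, ∀ y ∈ X, |f t x - f t y| ≤ L * ‖x - y‖)
    (xstar : EuclideanSpace ℝ (Fin d)) (hxstar : xstar ∈ X)
    (y v : ℕ → EuclideanSpace ℝ (Fin d))
    (hy : ∀ t, y t ∈ (1 - δ / r) • X) (hv : ∀ t, ‖v t‖ = 1) :
    (∀ t, y t + δ • v t ∈ X) ∧
      ∑ t ∈ Finset.Icc 1 T, (f t (y t + δ • v t) - f t xstar)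
        ≤ ∑ t ∈ Finset.Icc 1 T, (f t (y t) - f t ((1 - δ / r) • xstar))
          + (L + L * D / r) * δ * T := by
  have hsub := hX.one_sub_div_smul_add_closedBall_subset hr hδ.le hδr.le hball
  have hshrunk : ∀ {z}, z ∈ (1 - δ / r) • X → z ∈ X := fun hz => by
    simpa using hsub (Set.add_mem_add hz (mem_closedBall_self hδ.le))
  have hδv : ∀ t, ‖δ • v t‖ = δ := fun t => by
    rw [norm_smul, hv, Real.norm_of_nonneg hδ.le, mul_one]
  have hmem : ∀ t, y t + δ • v t ∈ X := fun t =>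
    hsub (Set.add_mem_add (hy t) (mem_closedBall_zero_iff.2 (hδv t).le))
  -- `‖v 0‖ = 1` provides two points of `X` at distance `δ > 0`, which forces `0 ≤ L`.
  have hL : 0 ≤ L := by
    have hδv0 : δ • v 0 ∈ X := hball (mem_closedBall_zero_iff.2 ((hδv 0).trans_le hδr.le))
    have h := (abs_nonneg _).trans (hlip 0 _ hδv0 0 h0)
    rw [sub_zero, hδv] at h
    exact nonneg_of_mul_nonneg_left h hδ
  have hxD : ‖xstar‖ ≤ D := by simpa using hD xstar hxstar 0 h0
  refine ⟨hmem, ?_⟩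
  have hcard : ((Finset.Icc 1 T).card : ℝ) = T := by simp
  rw [← hcard]
  exact Finset.sum_le_sum_add_card_mul _ fun t _ =>
    sub_le_sub_one_sub_div_smul_add hL hr hδ.le (hlip t) hxstar hxD
    (hshrunk (Set.smul_mem_smul_set hxstar)) (hshrunk (hy t)) (hmem t) (hδv t).le

/-- Let `X ⊆ ℝ^d` be convex with `0 ∈ X`, diameter at most `D`, and
containing the closed ball of radius `r > 0`. Let `δ ∈ (0, r)`, `α = δ/r`,
`X_α = (1−α)X`. If each `f_t` is convex and `L`-Lipschitz on `X`, `x*` minimizes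
`Σ_t f_t` over `X`, `y* = (1−α)x*`, and `x_t = y_t + δ v_t` with `y_t ∈ X_α` and
`‖v_t‖ = 1`, then `y_t + δ v_t ∈ X` for all `t`, and
`Σ_{t=1}^T (f_t(x_t) − f_t(x*)) ≤ Σ_{t=1}^T (f_t(y_t) − f_t(y*)) + (L + LD/r) δ T`. -/
theorem regret_decomposition_shrunk_domain {d : ℕ}
    (X : Set (EuclideanSpace ℝ (Fin d))) (hX : Convex ℝ X)
    (h0 : (0 : EuclideanSpace ℝ (Fin d)) ∈ X)
    (D L r δ : ℝ) (hr : 0 < r)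
    (hD : ∀ x ∈ X, ∀ y ∈ X, ‖x - y‖ ≤ D)
    (hball : Metric.closedBall (0 : EuclideanSpace ℝ (Fin d)) r ⊆ X)
    (hδ : 0 < δ) (hδr : δ < r)
    (T : ℕ) (f : ℕ → EuclideanSpace ℝ (Fin d) → ℝ)
    (hconv : ∀ t, ConvexOn ℝ X (f t))
    (hlip : ∀ t, ∀ x ∈ X, ∀ y ∈ X, |f t x - f t y| ≤ L * ‖x - y‖)
    (xstar : EuclideanSpace ℝ (Fin d)) (hxstar : xstar ∈ X)
    (hmin : ∀ x ∈ X, ∑ t ∈ Finset.Icc 1 T, f t xstar ≤ ∑ t ∈ Finset.Icc 1 T, f t x)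
    (y v : ℕ → EuclideanSpace ℝ (Fin d))
    (hy : ∀ t, y t ∈ (1 - δ / r) • X) (hv : ∀ t, ‖v t‖ = 1) :
    (∀ t, y t + δ • v t ∈ X) ∧
      ∑ t ∈ Finset.Icc 1 T, (f t (y t + δ • v t) - f t xstar)
        ≤ ∑ t ∈ Finset.Icc 1 T, (f t (y t) - f t ((1 - δ / r) • xstar))
          + (L + L * D / r) * δ * T :=
  regret_decomposition_shrunk_domain_general X hX h0 D L r δ hr hD hball hδ hδr T f hlip xstar
    hxstar y v hy hv
end
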